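/- Let q be a prime power, m a positive even integer, and α a primitive element (generator of the multiplicative group) of F_{q^m}. For distinct u, v in the set M = {1} ∪ {q^ℓ + 1 : 0 < ℓ < m/2}, the elements α^{-u} and α^{-v} are not conjugate over F_q; that is, there is no s with 0 ≤ s ≤ m-1 such that q^s · u ≡ v (mod q^m - 1). -/

import Mathlib

/-!
Since `q ^ m ≡ 1 [MOD q ^ m - 1]`, multiplying by `q ^ s` rotates exponents modulo `m`:
`q ^ s * (q ^ k + 1) ≡ q ^ a + q ^ b` with `a, b < m`. Both sides of a putative congruence with
`q ^ ℓ + 1` then lie in `[2, q ^ m]`, a window shorter than the modulus, so the congruence is an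
equality of integers. Reducing modulo `q` shows that `q ^ ℓ + 1` (with `ℓ > 0`) is neither a power
of `q` nor a sum of two powers of `q` other than `q ^ ℓ + q ^ 0`, and the exponents then force
`k = ℓ`, or `m ∣ k + ℓ`, which `k + ℓ < m` rules out. The case `v = 1` reduces to `u = 1` since
`q ^ s` is invertible modulo `q ^ m - 1`.
-/

namespace Nat

theorem ModEq.eq_of_le_of_lt_add {n a b c : ℕ} (h : a ≡ b [MOD n]) (ha : c ≤ a) (hb : c ≤ b)
    (ha' : a < c + n) (hb' : b < c + n) : a = b :=
  h.eq_of_abs_lt (by rw [abs_lt]; omega)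

variable {q m : ℕ}

theorem pow_modEq_pow_mod (hq : 0 < q) (x : ℕ) : q ^ x ≡ q ^ (x % m) [MOD q ^ m - 1] :=
  calc q ^ x = (q ^ m) ^ (x / m) * q ^ (x % m) := by rw [← pow_mul, ← pow_add, div_add_mod]
    _ ≡ 1 ^ (x / m) * q ^ (x % m) [MOD q ^ m - 1] :=
      ((modEq_sub (one_le_pow _ _ hq)).pow _).mul_right _
    _ = q ^ (x % m) := by rw [one_pow, one_mul]

theorem exists_pow_mul_modEq_of_pow_mul_modEq (hq : 0 < q) (hm : 0 < m) {s u v : ℕ}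
    (h : q ^ s * u ≡ v [MOD q ^ m - 1]) : ∃ t, q ^ t * v ≡ u [MOD q ^ m - 1] := by
  refine ⟨(m - 1) * s, ?_⟩
  have hinv : q ^ ((m - 1) * s) * q ^ s ≡ 1 [MOD q ^ m - 1] := by
    rw [← pow_add, ← add_one_mul, Nat.sub_add_cancel hm, pow_mul]
    exact (modEq_sub (one_le_pow _ _ hq)).pow s |>.trans (by rw [one_pow])
  calc q ^ ((m - 1) * s) * v
      ≡ q ^ ((m - 1) * s) * (q ^ s * u) [MOD q ^ m - 1] := h.symm.mul_left _
    _ = q ^ ((m - 1) * s) * q ^ s * u := (mul_assoc _ _ _).symm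
    _ ≡ 1 * u [MOD q ^ m - 1] := hinv.mul_right _
    _ = u := one_mul u

theorem pow_mul_pow_add_one_modEq (hq : 0 < q) (s k : ℕ) :
    q ^ s * (q ^ k + 1) ≡ q ^ ((s + k) % m) + q ^ (s % m) [MOD q ^ m - 1] := by
  rw [mul_add, mul_one, ← pow_add]
  exact (pow_modEq_pow_mod hq _).add (pow_modEq_pow_mod hq _)

theorem pow_add_one_lt_pow {ℓ : ℕ} (hq : 2 ≤ q) (hℓ : 0 < ℓ) (hℓm : ℓ < m) : q ^ ℓ + 1 < q ^ m :=
  calc q ^ ℓ + 1 < q ^ ℓ * 2 := by have := one_lt_pow hℓ.ne' hq; omega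
    _ ≤ q ^ ℓ * q := Nat.mul_le_mul_left _ hq
    _ = q ^ (ℓ + 1) := (pow_succ q ℓ).symm
    _ ≤ q ^ m := Nat.pow_le_pow_right (by omega) hℓm

theorem pow_add_pow_le_pow {a b : ℕ} (hq : 2 ≤ q) (ha : a < m) (hb : b < m) :
    q ^ a + q ^ b ≤ q ^ m := by
  have hle : ∀ x < m, q ^ x ≤ q ^ (m - 1) := fun x hx => Nat.pow_le_pow_right (by omega) (by omega)
  calc q ^ a + q ^ b ≤ q ^ (m - 1) * 2 := by have := hle a ha; have := hle b hb; omega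
    _ ≤ q ^ (m - 1) * q := Nat.mul_le_mul_left _ hq
    _ = q ^ m := by rw [← pow_succ, Nat.sub_add_cancel (by omega)]

theorem not_dvd_pow_add_one {ℓ : ℕ} (hq : 2 ≤ q) (hℓ : ℓ ≠ 0) : ¬ q ∣ q ^ ℓ + 1 := fun h => by
  have := Nat.le_of_dvd one_pos ((Nat.dvd_add_right (dvd_pow_self q hℓ)).mp h)
  omega

theorem pow_ne_pow_add_one {a ℓ : ℕ} (hq : 2 ≤ q) (hℓ : ℓ ≠ 0) : q ^ a ≠ q ^ ℓ + 1 := by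
  intro h
  rcases eq_or_ne a 0 with rfl | ha
  · have := one_le_pow ℓ q (by omega)
    rw [pow_zero] at h
    omega
  · exact not_dvd_pow_add_one hq hℓ (h ▸ dvd_pow_self q ha)

theorem eq_of_pow_add_pow_eq_pow_add_one {a b ℓ : ℕ} (hq : 2 ≤ q) (hℓ : ℓ ≠ 0)
    (h : q ^ a + q ^ b = q ^ ℓ + 1) : (a = ℓ ∧ b = 0) ∨ (a = 0 ∧ b = ℓ) := by
  rcases eq_or_ne a 0 with rfl | ha
  · rw [pow_zero] at h
    exact Or.inr ⟨rfl, Nat.pow_right_injective hq (show q ^ b = q ^ ℓ by omega)⟩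
  rcases eq_or_ne b 0 with rfl | hb
  · rw [pow_zero] at h
    exact Or.inl ⟨Nat.pow_right_injective hq (show q ^ a = q ^ ℓ by omega), rfl⟩
  exact absurd (h ▸ dvd_add (dvd_pow_self q ha) (dvd_pow_self q hb)) (not_dvd_pow_add_one hq hℓ)

theorem not_pow_modEq_pow_add_one {ℓ : ℕ} (hq : 2 ≤ q) (hℓ : 0 < ℓ) (hℓm : ℓ < m) (s : ℕ) :
    ¬ q ^ s ≡ q ^ ℓ + 1 [MOD q ^ m - 1] := by
  intro h
  have hpos := one_le_pow (s % m) q (by omega)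
  have hlt := pow_lt_pow_right₀ (by omega : 1 < q) (mod_lt s (by omega : 0 < m))
  have hℓlt := pow_add_one_lt_pow hq hℓ hℓm
  exact pow_ne_pow_add_one hq hℓ.ne' <|
    ((pow_modEq_pow_mod (by omega) s).symm.trans h).eq_of_le_of_lt_add (c := 1)
      hpos (by omega) (by omega) (by omega)

theorem eq_of_pow_mul_pow_add_one_modEq {s k ℓ : ℕ} (hq : 2 ≤ q) (hℓ : 0 < ℓ) (hkℓ : k + ℓ < m)
    (h : q ^ s * (q ^ k + 1) ≡ q ^ ℓ + 1 [MOD q ^ m - 1]) : k = ℓ := by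
  have hm : 0 < m := by omega
  have hpos : ∀ x, 1 ≤ q ^ x := fun x => one_le_pow x q (by omega)
  have hle := pow_add_pow_le_pow hq (mod_lt (s + k) hm) (mod_lt s hm)
  have hlt := pow_add_one_lt_pow hq hℓ (by omega : ℓ < m)
  have hsum : q ^ ((s + k) % m) + q ^ (s % m) = q ^ ℓ + 1 :=
    ((pow_mul_pow_add_one_modEq (by omega) s k).symm.trans h).eq_of_le_of_lt_add (c := 2)
      (by have := hpos ((s + k) % m); have := hpos (s % m); omega)
      (by have := hpos ℓ; omega) (by omega) (by omega)
  rcases eq_of_pow_add_pow_eq_pow_add_one hq hℓ.ne' hsum with ⟨hsk, hs⟩ | ⟨hsk, hs⟩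
  · rwa [← mod_add_mod, hs, zero_add, mod_eq_of_lt (by omega)] at hsk
  · rw [← mod_add_mod, hs, add_comm, mod_eq_of_lt hkℓ] at hsk
    omega

end Nat

theorem stmt_3_general (q m : ℕ) (hq : IsPrimePow q)
    (u v : ℕ)
    (hu : u = 1 ∨ ∃ ℓ, 0 < ℓ ∧ ℓ < m / 2 ∧ u = q ^ ℓ + 1)
    (hv : v = 1 ∨ ∃ ℓ, 0 < ℓ ∧ ℓ < m / 2 ∧ v = q ^ ℓ + 1)
    (huv : u ≠ v) (s : ℕ) :
    ¬ (q ^ s * u ≡ v [MOD q ^ m - 1]) := by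
  intro h
  have hq2 : 2 ≤ q := hq.two_le
  rcases hu with rfl | ⟨k, hk, hkm, rfl⟩ <;> rcases hv with rfl | ⟨ℓ, hℓ, hℓm, rfl⟩
  · exact huv rfl
  · rw [mul_one] at h
    exact Nat.not_pow_modEq_pow_add_one hq2 hℓ (by omega) s h
  · obtain ⟨t, ht⟩ := Nat.exists_pow_mul_modEq_of_pow_mul_modEq (by omega) (by omega) h
    rw [mul_one] at ht
    exact Nat.not_pow_modEq_pow_add_one hq2 hk (by omega) t ht
  · exact huv (by rw [Nat.eq_of_pow_mul_pow_add_one_modEq hq2 hℓ (by omega) h])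

/-- For distinct u, v in M = {1} ∪ {q^ℓ+1 : 0 < ℓ < m/2}, the elements α^{-u}, α^{-v}
are not conjugate over F_q: there is no s, 0 ≤ s ≤ m-1, with q^s·u ≡ v (mod q^m-1). -/
theorem stmt_3 (q m : ℕ) (hq : IsPrimePow q) (hm : 0 < m) (hme : Even m)
    (u v : ℕ)
    (hu : u = 1 ∨ ∃ ℓ, 0 < ℓ ∧ ℓ < m / 2 ∧ u = q ^ ℓ + 1)
    (hv : v = 1 ∨ ∃ ℓ, 0 < ℓ ∧ ℓ < m / 2 ∧ v = q ^ ℓ + 1)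
    (huv : u ≠ v) (s : ℕ) (hs : s ≤ m - 1) :
    ¬ (q ^ s * u ≡ v [MOD q ^ m - 1]) :=
  stmt_3_general q m hq u v hu hv huv s
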